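/- arXiv:2001.08498 — 2 statements merged into one kernel-verified Lean document; each statement's English description precedes it below -/
import Mathlib

section
/- Let p be a prime and N = pM. For γ = (a b; c d) ∈ Γ₀(N) set α_γ := (a pb; c/p d), which lies in Γ₀(M). If p ∤ M, fix a matrix μ_M = (x y; Mz pw) ∈ SL₂(ℤ) (such a matrix exists since gcd(p,M) = 1) and for γ ∈ Γ₀(N) set β_γ := γ·μ_M ∈ Γ₀(M). Let A := {Γ∞·α_γ : γ ∈ Γ₀(N)} and B := {Γ∞·β_γ : γ ∈ Γ₀(N)}, viewed as subsets of the coset space Γ∞\Γ₀(M). Then: (i) if p ∤ M, Γ∞\Γ₀(M) is the disjoint union of A and B (A ∪ B = Γ∞\Γ₀(M) and A ∩ B = ∅); (ii) if p | M, then Γ∞\Γ₀(M) = A. -/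
open Matrix MatrixGroups

local notation "SL2Z" => Matrix.SpecialLinearGroup (Fin 2) ℤ

/-- `Γ₀(K)` as a set of elements of `SL(2,ℤ)`. -/
def Gamma0' (K : ℤ) : Set SL2Z := { γ | K ∣ γ.1 1 0 }

/-- The translation matrix `T = (1 1; 0 1)`. -/
def Tmat : SL2Z := ⟨!![1, 1; 0, 1], by norm_num [Matrix.det_fin_two_of]⟩

/-- `Γ∞ = {±T^t : t ∈ ℤ}`. -/
def GammaInf : Set SL2Z := { A | ∃ t : ℤ, A = Tmat ^ t ∨ A = -(Tmat ^ t) }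

/-- The right coset `Γ∞ · δ`. -/
def cosetOf (δ : SL2Z) : Set SL2Z := { x | ∃ u ∈ GammaInf, x = u * δ }

/-- The coset space `Γ∞ \ Γ₀(K)`, as a set of cosets. -/
def cosets (K : ℤ) : Set (Set SL2Z) := { C | ∃ δ ∈ Gamma0' K, C = cosetOf δ }

/-- The set of cosets `Γ∞ · α_γ`, `γ ∈ Γ₀(pM)`, where `α_γ = (a pb; c/p d)`. -/
def alphaSet (p M : ℕ) : Set (Set SL2Z) :=
  { C | ∃ γ ∈ Gamma0' ((p : ℤ) * M), ∃ α : SL2Z,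
      α.1 0 0 = γ.1 0 0 ∧ α.1 0 1 = (p : ℤ) * γ.1 0 1 ∧
      (p : ℤ) * α.1 1 0 = γ.1 1 0 ∧ α.1 1 1 = γ.1 1 1 ∧
      C = cosetOf α }

/-- The set of cosets `Γ∞ · (γ μ)`, `γ ∈ Γ₀(pM)`. -/
def betaSet (p M : ℕ) (μ : SL2Z) : Set (Set SL2Z) :=
  { C | ∃ γ ∈ Gamma0' ((p : ℤ) * M), C = cosetOf (γ * μ) }

/-!
A coset `Γ∞ δ` remembers exactly the bottom row `(c, d)` of `δ` up to sign: `x ∈ Γ∞ δ` iff the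
bottom rows of `x` and `δ` are proportional. Since `(c, d)` is a primitive vector, whether `p ∣ d`
is therefore a property of the coset. The cosets `Γ∞ α_γ` are exactly those with `p ∤ d` (solve
`a d + v p c = 1` to lift a row `(c, d)`), and for `p ∤ M` the cosets `Γ∞ γ μ_M` are exactly those
with `p ∣ d`. If `p ∣ M`, then `p ∣ c` forces `p ∤ d` for every element of `Γ₀(M)`.
-/

lemma SL2_mul_apply_one_zero (g h : SL2Z) :
    (g * h).1 1 0 = g.1 1 0 * h.1 0 0 + g.1 1 1 * h.1 1 0 := by
  simp [Matrix.mul_apply, Fin.sum_univ_two]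

lemma SL2_mul_apply_one_one (g h : SL2Z) :
    (g * h).1 1 1 = g.1 1 0 * h.1 0 1 + g.1 1 1 * h.1 1 1 := by
  simp [Matrix.mul_apply, Fin.sum_univ_two]

lemma SL2_inv_apply_zero_zero (g : SL2Z) : (g⁻¹).1 0 0 = g.1 1 1 := by
  simp [Matrix.SpecialLinearGroup.SL2_inv_expl]

lemma SL2_inv_apply_one_zero (g : SL2Z) : (g⁻¹).1 1 0 = -g.1 1 0 := by
  simp [Matrix.SpecialLinearGroup.SL2_inv_expl]

lemma not_dvd_apply_one_one_of_dvd_apply_one_zero {p : ℤ} (hp : ¬IsUnit p) (g : SL2Z)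
    (h : p ∣ g.1 1 0) : ¬p ∣ g.1 1 1 :=
  fun h' ↦ hp ((g.isCoprime_row 1).isUnit_of_dvd' h h')

lemma Tmat_eq_T : Tmat = ModularGroup.T := rfl

lemma mem_GammaInf_iff {u : SL2Z} : u ∈ GammaInf ↔ u.1 1 0 = 0 := by
  constructor
  · rintro ⟨t, rfl | rfl⟩ <;> simp [Tmat_eq_T, ModularGroup.coe_T_zpow]
  · intro hc
    have had : u.1 0 0 * u.1 1 1 = 1 := by
      have := u.det_coe
      rw [Matrix.det_fin_two, hc] at this
      linarith
    rcases Int.eq_one_or_neg_one_of_mul_eq_one' had with ⟨ha, hd⟩ | ⟨ha, hd⟩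
    · refine ⟨u.1 0 1, Or.inl (Subtype.ext ?_)⟩
      ext i j
      fin_cases i <;> fin_cases j <;> simp [Tmat_eq_T, ModularGroup.coe_T_zpow, ha, hc, hd]
    · refine ⟨-u.1 0 1, Or.inr (Subtype.ext ?_)⟩
      ext i j
      fin_cases i <;> fin_cases j <;> simp [Tmat_eq_T, ModularGroup.coe_T_zpow, ha, hc, hd]

lemma mem_cosetOf_iff {x δ : SL2Z} : x ∈ cosetOf δ ↔ x.1 1 0 * δ.1 1 1 = x.1 1 1 * δ.1 1 0 := by
  have hx : x ∈ cosetOf δ ↔ x * δ⁻¹ ∈ GammaInf :=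
    ⟨fun ⟨u, hu, hxu⟩ ↦ by rwa [hxu, mul_inv_cancel_right],
      fun h ↦ ⟨x * δ⁻¹, h, (inv_mul_cancel_right x δ).symm⟩⟩
  rw [hx, mem_GammaInf_iff, SL2_mul_apply_one_zero, SL2_inv_apply_zero_zero,
    SL2_inv_apply_one_zero, mul_neg, ← sub_eq_add_neg, sub_eq_zero]

lemma mem_cosetOf_self (δ : SL2Z) : δ ∈ cosetOf δ := mem_cosetOf_iff.mpr (mul_comm _ _)

lemma cosetOf_eq_of_apply_one {δ₁ δ₂ : SL2Z} (h₀ : δ₁.1 1 0 = δ₂.1 1 0)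
    (h₁ : δ₁.1 1 1 = δ₂.1 1 1) : cosetOf δ₁ = cosetOf δ₂ := by
  ext x
  rw [mem_cosetOf_iff, mem_cosetOf_iff, h₀, h₁]

lemma dvd_apply_one_one_of_mem_cosetOf {p : ℤ} (hp : Prime p) {x δ : SL2Z}
    (hx : x ∈ cosetOf δ) (hδ : p ∣ δ.1 1 1) : p ∣ x.1 1 1 := by
  have hcross : p ∣ x.1 1 1 * δ.1 1 0 := mem_cosetOf_iff.mp hx ▸ hδ.mul_left _
  refine (hp.dvd_or_dvd hcross).resolve_right fun hc ↦ ?_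
  exact not_dvd_apply_one_one_of_dvd_apply_one_zero hp.not_isUnit δ hc hδ

def cosetsWith (K : ℤ) (P : SL2Z → Prop) : Set (Set SL2Z) :=
  { C | ∃ δ ∈ Gamma0' K, P δ ∧ C = cosetOf δ }

lemma cosets_eq_cosetsWith_union (K : ℤ) (P : SL2Z → Prop) :
    cosets K = cosetsWith K (fun δ ↦ ¬P δ) ∪ cosetsWith K P := by
  ext C
  constructor
  · rintro ⟨δ, hδ, rfl⟩
    by_cases h : P δ
    exacts [Or.inr ⟨δ, hδ, h, rfl⟩, Or.inl ⟨δ, hδ, h, rfl⟩]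
  · rintro (⟨δ, hδ, -, rfl⟩ | ⟨δ, hδ, -, rfl⟩) <;> exact ⟨δ, hδ, rfl⟩

lemma cosets_eq_cosetsWith {K : ℤ} {P : SL2Z → Prop} (h : ∀ δ ∈ Gamma0' K, P δ) :
    cosets K = cosetsWith K P := by
  ext C
  constructor
  · rintro ⟨δ, hδ, rfl⟩
    exact ⟨δ, hδ, h δ hδ, rfl⟩
  · rintro ⟨δ, hδ, -, rfl⟩
    exact ⟨δ, hδ, rfl⟩

lemma alphaSet_eq {p : ℕ} (hp : p.Prime) (M : ℕ) :
    alphaSet p M = cosetsWith M (fun δ ↦ ¬(p : ℤ) ∣ δ.1 1 1) := by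
  have hpZ : Prime (p : ℤ) := Nat.prime_iff_prime_int.mp hp
  ext C
  constructor
  · rintro ⟨γ, hγ, α, -, -, hα₁₀, hα₁₁, rfl⟩
    obtain ⟨k, hk⟩ := hγ
    refine ⟨α, ⟨k, mul_left_cancel₀ hpZ.ne_zero (by rw [hα₁₀, hk]; ring)⟩, ?_, rfl⟩
    beta_reduce
    rw [hα₁₁]
    exact not_dvd_apply_one_one_of_dvd_apply_one_zero hpZ.not_isUnit γ ⟨M * k, by rw [hk]; ring⟩
  · rintro ⟨δ, ⟨k, hk⟩, hd, rfl⟩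
    -- Solve `a d + v (p c) = 1`; then `γ = (a, -v; p c, d)` has `α_γ = (a, -p v; c, d)`,
    -- which has the bottom row of `δ`.
    obtain ⟨a, v, hav⟩ := ((hpZ.coprime_iff_not_dvd.mpr hd).symm.mul_right
      (δ.isCoprime_row 1).symm)
    refine ⟨⟨!![a, -v; p * δ.1 1 0, δ.1 1 1],
        by rw [Matrix.det_fin_two_of]; linear_combination hav⟩,
      ⟨k, show (p : ℤ) * δ.1 1 0 = _ by rw [hk]; ring⟩,
      ⟨!![a, p * -v; δ.1 1 0, δ.1 1 1], by rw [Matrix.det_fin_two_of]; linear_combination hav⟩,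
      rfl, rfl, rfl, rfl, cosetOf_eq_of_apply_one rfl rfl⟩

lemma betaSet_eq {p M : ℕ} (hcop : IsCoprime (p : ℤ) M) {μ : SL2Z}
    (hμ₁₀ : (M : ℤ) ∣ μ.1 1 0) (hμ₁₁ : (p : ℤ) ∣ μ.1 1 1) :
    betaSet p M μ = cosetsWith M (fun δ ↦ (p : ℤ) ∣ δ.1 1 1) := by
  ext C
  constructor
  · rintro ⟨γ, hγ, rfl⟩
    refine ⟨γ * μ, ?_, ?_, rfl⟩
    · change (M : ℤ) ∣ _
      rw [SL2_mul_apply_one_zero]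
      exact dvd_add ((dvd_mul_left _ _).trans hγ |>.mul_right _) (hμ₁₀.mul_left _)
    · beta_reduce
      rw [SL2_mul_apply_one_one]
      exact dvd_add ((dvd_mul_right _ _).trans hγ |>.mul_right _) (hμ₁₁.mul_left _)
  · rintro ⟨δ, hδ, hd, rfl⟩
    refine ⟨δ * μ⁻¹, ?_, by rw [inv_mul_cancel_right]⟩
    change (p * M : ℤ) ∣ _
    rw [SL2_mul_apply_one_zero, SL2_inv_apply_zero_zero, SL2_inv_apply_one_zero]
    exact hcop.mul_dvd (dvd_add (hμ₁₁.mul_left _) (hd.mul_right _))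
      (dvd_add (hδ.mul_right _) (hμ₁₀.neg_right.mul_left _))

theorem statement0_general (p M : ℕ) (hp : p.Prime) :
    ((¬ p ∣ M) → ∀ μ : SL2Z, (∃ x y z w : ℤ, μ.1 = !![x, y; (M : ℤ) * z, (p : ℤ) * w]) →
      cosets (M : ℤ) = alphaSet p M ∪ betaSet p M μ ∧ alphaSet p M ∩ betaSet p M μ = ∅) ∧
    (p ∣ M → cosets (M : ℤ) = alphaSet p M) := by
  have hpZ : Prime (p : ℤ) := Nat.prime_iff_prime_int.mp hp
  refine ⟨fun hpM μ ⟨x, y, z, w, hμ⟩ ↦ ?_, fun hpM ↦ ?_⟩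
  · have hcop : IsCoprime (p : ℤ) M :=
      hpZ.coprime_iff_not_dvd.mpr (by exact_mod_cast hpM)
    rw [alphaSet_eq hp, betaSet_eq hcop (by simp [hμ]) (by simp [hμ])]
    refine ⟨cosets_eq_cosetsWith_union _ _, Set.eq_empty_of_forall_notMem ?_⟩
    rintro C ⟨⟨α, -, hα, rfl⟩, β, -, hβ, hαβ⟩
    exact hα (dvd_apply_one_one_of_mem_cosetOf hpZ (hαβ ▸ mem_cosetOf_self α) hβ)
  · rw [alphaSet_eq hp]
    exact cosets_eq_cosetsWith fun δ hδ ↦ not_dvd_apply_one_one_of_dvd_apply_one_zero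
      hpZ.not_isUnit δ ((Int.natCast_dvd_natCast.mpr hpM).trans hδ)

theorem statement0 (p M : ℕ) (hp : p.Prime) (hM : 0 < M) :
    ((¬ p ∣ M) → ∀ μ : SL2Z, (∃ x y z w : ℤ, μ.1 = !![x, y; (M : ℤ) * z, (p : ℤ) * w]) →
      cosets (M : ℤ) = alphaSet p M ∪ betaSet p M μ ∧ alphaSet p M ∩ betaSet p M μ = ∅) ∧
    (p ∣ M → cosets (M : ℤ) = alphaSet p M) :=
  statement0_general p M hp
end

section
/- Let p be a prime, M a positive integer with p | M, and Q an exact divisor of M (Q | M and gcd(Q, M/Q) = 1) with p | Q. Let W = (Qx y; Mz Qw) be any integer matrix with determinant Q (x, y, z, w ∈ ℤ), and let T := (1 1; 0 1). Then for every integer j the matrix δ_j := W·T^j·W^{−1} has integer entries, lies in Γ₀(M), and satisfies δ_j ≡ I (mod p) entrywise, so that W·T^j = δ_j·W; explicitly, δ_j = (Qxw − jMxz − (M/Q)yz , jQx² ; −j(M/Q)z²M , Qxw + jMxz − (M/Q)yz). Moreover, if p ∤ j then δ_j ∉ Γ₀(pM). -/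
open Matrix MatrixGroups

local notation "SL2Z" => Matrix.SpecialLinearGroup (Fin 2) ℤ

/-!
Dividing `det W = Q` by `Q` gives the unimodular relation `Q x w - (M/Q) y z = 1`; granted it,
`W T^j = δ_j W` and `det δ_j = 1` are polynomial identities. The entries of `δ_j - I` are
multiples of `M` or of `Q`, hence of `p`. The lower-left entry is `-j (M/Q) z² M`: exactness of `Q`
gives `p ∤ M/Q`, and the unimodular relation together with `p ∣ Q` gives `p ∤ z`, so `p M` divides
it only if `p ∣ j`.
-/

section Conjugation

variable {R : Type*} [CommRing R] {Q M m x y z w j : R}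

variable (Q M m x y z w j) in
/-- `W T^j W⁻¹` for `W = (Qx y; Mz Qw)`, with `m` standing for `M / Q`. -/
def conjTranslation : Matrix (Fin 2) (Fin 2) R :=
  !![Q * x * w - j * M * x * z - m * y * z, j * Q * x ^ 2;
     -(j * (m * z ^ 2) * M), Q * x * w + j * M * x * z - m * y * z]

theorem det_conjTranslation (hm : Q * m = M) (hunimod : Q * x * w - m * y * z = 1) :
    (conjTranslation Q M m x y z w j).det = 1 := by
  rw [conjTranslation, det_fin_two_of]
  linear_combination (Q * x * w - m * y * z + 1) * hunimod + j ^ 2 * x ^ 2 * z ^ 2 * M * hm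

theorem mul_translation_eq_conjTranslation_mul (hm : Q * m = M)
    (hunimod : Q * x * w - m * y * z = 1) :
    !![Q * x, y; M * z, Q * w] * !![1, j; 0, 1] =
      conjTranslation Q M m x y z w j * !![Q * x, y; M * z, Q * w] := by
  subst hm
  rw [conjTranslation, mul_fin_two, mul_fin_two]
  ext i k
  fin_cases i <;> fin_cases k <;> simp
  · linear_combination (-(Q * x)) * hunimod
  · linear_combination (-(y + j * Q * x)) * hunimod
  · linear_combination (-(Q * m * z)) * hunimod
  · linear_combination (-(Q * w + j * Q * m * z)) * hunimod

theorem dvd_conjTranslation_one_zero : M ∣ conjTranslation Q M m x y z w j 1 0 :=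
  ⟨-(j * (m * z ^ 2)), by simp [conjTranslation]; ring⟩

theorem dvd_conjTranslation_sub_one {p : R} (hunimod : Q * x * w - m * y * z = 1) (hpM : p ∣ M)
    (hpQ : p ∣ Q) :
    p ∣ conjTranslation Q M m x y z w j 0 0 - 1 ∧ p ∣ conjTranslation Q M m x y z w j 0 1 ∧
      p ∣ conjTranslation Q M m x y z w j 1 0 ∧ p ∣ conjTranslation Q M m x y z w j 1 1 - 1 := by
  have h00 : conjTranslation Q M m x y z w j 0 0 - 1 = -(j * x * z) * M := by
    simp only [conjTranslation, of_apply, cons_val', cons_val_zero, empty_val', cons_val_fin_one]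
    linear_combination hunimod
  have h11 : conjTranslation Q M m x y z w j 1 1 - 1 = j * x * z * M := by
    simp only [conjTranslation, of_apply, cons_val', cons_val_one, empty_val', cons_val_fin_one]
    linear_combination hunimod
  refine ⟨h00 ▸ hpM.mul_left _, ?_, hpM.trans dvd_conjTranslation_one_zero, h11 ▸ hpM.mul_left _⟩
  simpa [conjTranslation] using (hpQ.mul_left j).mul_right _

theorem not_dvd_of_unimodular {p : R} (hp : Prime p) (hunimod : Q * x * w - m * y * z = 1)
    (hpQ : p ∣ Q) : ¬ p ∣ z := fun hz =>
  hp.not_isUnit <| isUnit_of_dvd_one <|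
    hunimod ▸ dvd_sub ((hpQ.mul_right x).mul_right w) (hz.mul_left _)

end Conjugation

section Domain

variable {R : Type*} [CommRing R] [IsDomain R] {Q M m x y z w j : R}

theorem unimodular_of_det_eq (hQ : Q ≠ 0) (hm : Q * m = M)
    (hdet : (!![Q * x, y; M * z, Q * w] : Matrix (Fin 2) (Fin 2) R).det = Q) :
    Q * x * w - m * y * z = 1 := by
  rw [det_fin_two_of] at hdet
  refine mul_left_cancel₀ hQ ?_
  linear_combination hdet - y * z * hm

theorem not_mul_dvd_conjTranslation_one_zero {p : R} (hp : Prime p) (hM : M ≠ 0)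
    (hpj : ¬ p ∣ j) (hpm : ¬ p ∣ m) (hpz : ¬ p ∣ z) :
    ¬ p * M ∣ conjTranslation Q M m x y z w j 1 0 := by
  have hentry : conjTranslation Q M m x y z w j 1 0 = -(j * (m * z ^ 2)) * M := by
    simp [conjTranslation]
  rw [hentry, mul_dvd_mul_iff_right hM, dvd_neg, hp.dvd_mul, hp.dvd_mul]
  rintro (h | h | h)
  exacts [hpj h, hpm h, hpz (hp.dvd_of_dvd_pow h)]

end Domain

theorem statement5_general (p : ℕ) (hp : p.Prime) (M Q : ℤ) (hpM : (p : ℤ) ∣ M)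
    (hQM : Q ∣ M) (hexact : Int.gcd Q (M / Q) = 1) (hpQ : (p : ℤ) ∣ Q)
    (x y z w : ℤ) (W : Matrix (Fin 2) (Fin 2) ℤ)
    (hW : W = !![Q * x, y; M * z, Q * w]) (hdet : W.det = Q)
    (j : ℤ) (δ : Matrix (Fin 2) (Fin 2) ℤ)
    (hδ : δ = !![Q * x * w - j * M * x * z - (M / Q) * y * z, j * Q * x ^ 2;
                 -(j * ((M / Q) * z ^ 2) * M), Q * x * w + j * M * x * z - (M / Q) * y * z]) :
    δ.det = 1 ∧ M ∣ δ 1 0 ∧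
      ((p : ℤ) ∣ (δ 0 0 - 1) ∧ (p : ℤ) ∣ δ 0 1 ∧ (p : ℤ) ∣ δ 1 0 ∧ (p : ℤ) ∣ (δ 1 1 - 1)) ∧
      W * ((Tmat ^ j : SL2Z) : Matrix (Fin 2) (Fin 2) ℤ) = δ * W ∧
      (¬ (p : ℤ) ∣ j → ¬ ((p : ℤ) * M ∣ δ 1 0)) := by
  have hpZ : Prime (p : ℤ) := Nat.prime_iff_prime_int.mp hp
  have hQ : Q ≠ 0 := by
    rintro rfl
    simp at hexact
  have hm : Q * (M / Q) = M := Int.mul_ediv_cancel' hQM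
  have hunimod := unimodular_of_det_eq hQ hm (hW ▸ hdet)
  have hpm : ¬ (p : ℤ) ∣ M / Q := fun h =>
    hpZ.not_isUnit ((Int.isCoprime_iff_gcd_eq_one.mpr hexact).isUnit_of_dvd' hpQ h)
  have hM : M ≠ 0 := hm ▸ mul_ne_zero hQ fun h => hpm (h ▸ dvd_zero _)
  have hT : ((Tmat ^ j : SL2Z) : Matrix (Fin 2) (Fin 2) ℤ) = !![1, j; 0, 1] :=
    ModularGroup.coe_T_zpow j
  change δ = conjTranslation Q M (M / Q) x y z w j at hδ
  subst hδ hW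
  exact ⟨det_conjTranslation hm hunimod, dvd_conjTranslation_one_zero,
    dvd_conjTranslation_sub_one hunimod hpM hpQ,
    hT ▸ mul_translation_eq_conjTranslation_mul hm hunimod,
    fun hj => not_mul_dvd_conjTranslation_one_zero hpZ hM hj hpm
      (not_dvd_of_unimodular hpZ hunimod hpQ)⟩

theorem statement5 (p : ℕ) (hp : p.Prime) (M Q : ℤ) (hM : 0 < M) (hpM : (p : ℤ) ∣ M)
    (hQM : Q ∣ M) (hexact : Int.gcd Q (M / Q) = 1) (hpQ : (p : ℤ) ∣ Q)
    (x y z w : ℤ) (W : Matrix (Fin 2) (Fin 2) ℤ)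
    (hW : W = !![Q * x, y; M * z, Q * w]) (hdet : W.det = Q)
    (j : ℤ) (δ : Matrix (Fin 2) (Fin 2) ℤ)
    (hδ : δ = !![Q * x * w - j * M * x * z - (M / Q) * y * z, j * Q * x ^ 2;
                 -(j * ((M / Q) * z ^ 2) * M), Q * x * w + j * M * x * z - (M / Q) * y * z]) :
    δ.det = 1 ∧ M ∣ δ 1 0 ∧
      ((p : ℤ) ∣ (δ 0 0 - 1) ∧ (p : ℤ) ∣ δ 0 1 ∧ (p : ℤ) ∣ δ 1 0 ∧ (p : ℤ) ∣ (δ 1 1 - 1)) ∧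
      W * ((Tmat ^ j : SL2Z) : Matrix (Fin 2) (Fin 2) ℤ) = δ * W ∧
      (¬ (p : ℤ) ∣ j → ¬ ((p : ℤ) * M ∣ δ 1 0)) :=
  statement5_general p hp M Q hpM hQM hexact hpQ x y z w W hW hdet j δ hδ
end
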